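/- arXiv:1709.08728 — 4 statements merged into one kernel-verified Lean document; each statement's English description precedes it below -/
import Mathlib

section
/- Let φ be a differentiable σ-almost convex function on a real inner product space with finite infimum φ*, let γ > σ, and for t = 1,…,T define F_t(w) = φ(w) + (γ/2)‖w − w_{t-1}‖² with exact minimizer w_t*, where w_0 is a fixed initial point and each random iterate w_t satisfies E[F_t(w_t) − F_t(w_t*)] ≤ ε. Then (1/T) Σ_{t=1}^T E‖w_{t-1} − w_t‖² ≤ 2(φ(w_0) − φ*)/(γT) + 2ε/γ. -/
/-!
Since `F_t(w_t*) ≤ F_t(w_{t-1}) = φ(w_{t-1})`, every iterate satisfies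
`(γ/2)‖w_{t-1} − w_t‖² ≤ (F_t(w_t) − F_t(w_t*)) + (φ(w_{t-1}) − φ(w_t))`. Taking expectations,
each step costs at most `ε` plus the decrease of `E φ(w_t)`; summing over `t` telescopes this
decrease to `φ(w_0) − E φ(w_T) ≤ φ(w_0) − φ*`.
-/

open MeasureTheory
open scoped RealInnerProductSpace

/-- The subproblem `F_t` of the paper is `proxObjective φ γ (w (t - 1))`. -/
noncomputable def proxObjective {E : Type*} [SeminormedAddCommGroup E] (f : E → ℝ) (γ : ℝ)
    (v x : E) : ℝ :=
  f x + γ / 2 * ‖x - v‖ ^ 2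

theorem Finset.sum_Icc_one_sub_telescope {M : Type*} [AddCommGroup M] (a : ℕ → M) (n : ℕ) :
    ∑ t ∈ Finset.Icc 1 n, (a (t - 1) - a t) = a 0 - a n := by
  induction n with
  | zero => simp
  | succ n ih => rw [Finset.sum_Icc_succ_top (by omega), ih, Nat.add_sub_cancel]; abel

section ProxStep

variable {E : Type*} [SeminormedAddCommGroup E] {f : E → ℝ} {γ : ℝ}

theorem sq_norm_sub_le_proxObjective_gap {v u xstar : E}
    (hmin : proxObjective f γ v xstar ≤ proxObjective f γ v v) :
    γ / 2 * ‖v - u‖ ^ 2 ≤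
      proxObjective f γ v u - proxObjective f γ v xstar + (f v - f u) := by
  simp only [proxObjective, sub_self, norm_zero] at hmin ⊢
  rw [norm_sub_rev]
  linarith

theorem integral_sq_norm_sub_le_of_proxObjective_gap {Ω : Type*} [MeasurableSpace Ω]
    {μ : Measure Ω} {ε : ℝ} (hγ : 0 ≤ γ) {v u xstar : Ω → E}
    (hmin : ∀ ω, proxObjective f γ (v ω) (xstar ω) ≤ proxObjective f γ (v ω) (v ω))
    (hv : Integrable (fun ω => f (v ω)) μ) (hu : Integrable (fun ω => f (u ω)) μ)
    (hgap_int : Integrable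
      (fun ω => proxObjective f γ (v ω) (u ω) - proxObjective f γ (v ω) (xstar ω)) μ)
    (hgap : ∫ ω, (proxObjective f γ (v ω) (u ω) - proxObjective f γ (v ω) (xstar ω)) ∂μ ≤ ε) :
    γ / 2 * ∫ ω, ‖v ω - u ω‖ ^ 2 ∂μ ≤ ∫ ω, f (v ω) ∂μ - ∫ ω, f (u ω) ∂μ + ε := by
  have hpointwise := fun ω => sq_norm_sub_le_proxObjective_gap (u := u ω) (hmin ω)
  have hdecrease : Integrable (fun ω => f (v ω) - f (u ω)) μ := hv.sub hu
  have hintegral := integral_mono_of_nonneg (.of_forall fun ω => by positivity)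
    (hgap_int.add hdecrease) (.of_forall hpointwise)
  simp only [Pi.add_apply] at hintegral
  rw [integral_const_mul, integral_add hgap_int hdecrease, integral_sub hv hu] at hintegral
  linarith

end ProxStep

theorem mul_sum_le_of_le_sub_add {c ε m : ℝ} {a d : ℕ → ℝ} {T : ℕ}
    (hstep : ∀ t ∈ Finset.Icc 1 T, c * d t ≤ a (t - 1) - a t + ε) (hm : m ≤ a T) :
    c * ∑ t ∈ Finset.Icc 1 T, d t ≤ a 0 - m + T * ε := by
  calc c * ∑ t ∈ Finset.Icc 1 T, d t
      ≤ ∑ t ∈ Finset.Icc 1 T, (a (t - 1) - a t + ε) := by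
        rw [Finset.mul_sum]; exact Finset.sum_le_sum hstep
    _ = a 0 - a T + T * ε := by
        rw [Finset.sum_add_distrib, Finset.sum_Icc_one_sub_telescope, Finset.sum_const,
          Nat.card_Icc, Nat.add_sub_cancel, nsmul_eq_mul]
    _ ≤ a 0 - m + T * ε := by linarith

theorem minibatch_prox_average_step_bound_general
    {E : Type*} [NormedAddCommGroup E]
    {Ω : Type*} [MeasureSpace Ω] [IsProbabilityMeasure (volume : Measure Ω)]
    (φ : E → ℝ) (σ γ ε φstar : ℝ) (T : ℕ)
    (hT : 0 < T) (hσ : 0 ≤ σ) (hγ : σ < γ)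
    (hinf : IsGLB (Set.range φ) φstar)
    (w0 : E) (w : ℕ → Ω → E) (wstar : ℕ → Ω → E)
    (hw0 : w 0 = fun _ => w0)
    (hmin : ∀ t ∈ Finset.Icc 1 T, ∀ ω, ∀ x,
        φ (wstar t ω) + γ / 2 * ‖wstar t ω - w (t - 1) ω‖ ^ 2
          ≤ φ x + γ / 2 * ‖x - w (t - 1) ω‖ ^ 2)
    (hint_phi : ∀ t ∈ Finset.Icc 0 T, Integrable (fun ω => φ (w t ω)))
    (hint_sub : ∀ t ∈ Finset.Icc 1 T,
        Integrable (fun ω => φ (w t ω) + γ / 2 * ‖w t ω - w (t - 1) ω‖ ^ 2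
          - (φ (wstar t ω) + γ / 2 * ‖wstar t ω - w (t - 1) ω‖ ^ 2)))
    (hsub : ∀ t ∈ Finset.Icc 1 T,
        ∫ ω, (φ (w t ω) + γ / 2 * ‖w t ω - w (t - 1) ω‖ ^ 2
          - (φ (wstar t ω) + γ / 2 * ‖wstar t ω - w (t - 1) ω‖ ^ 2)) ≤ ε) :
    (T : ℝ)⁻¹ * ∑ t ∈ Finset.Icc 1 T, ∫ ω, ‖w (t - 1) ω - w t ω‖ ^ 2
      ≤ 2 * (φ w0 - φstar) / (γ * T) + 2 * ε / γ := by
  have hγ0 : 0 < γ := hσ.trans_lt hγ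
  have hstep : ∀ t ∈ Finset.Icc 1 T, γ / 2 * ∫ ω, ‖w (t - 1) ω - w t ω‖ ^ 2
      ≤ (∫ ω, φ (w (t - 1) ω)) - (∫ ω, φ (w t ω)) + ε := fun t ht =>
    integral_sq_norm_sub_le_of_proxObjective_gap hγ0.le (fun ω => hmin t ht ω _)
      (hint_phi _ (by simp only [Finset.mem_Icc] at ht ⊢; omega))
      (hint_phi _ (by simp only [Finset.mem_Icc] at ht ⊢; omega))
      (hint_sub t ht) (hsub t ht)
  have hlast : φstar ≤ ∫ ω, φ (w T ω) := by
    simpa using integral_mono (integrable_const φstar) (hint_phi T (by simp))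
      fun ω => hinf.1 (Set.mem_range_self (w T ω))
  have hsum := mul_sum_le_of_le_sub_add (a := fun t => ∫ ω, φ (w t ω)) hstep hlast
  simp only [hw0, integral_const, probReal_univ, one_smul] at hsum
  calc (T : ℝ)⁻¹ * ∑ t ∈ Finset.Icc 1 T, ∫ ω, ‖w (t - 1) ω - w t ω‖ ^ 2
      = 2 / (γ * T) * (γ / 2 * ∑ t ∈ Finset.Icc 1 T, ∫ ω, ‖w (t - 1) ω - w t ω‖ ^ 2) := by
        field_simp
    _ ≤ 2 / (γ * T) * (φ w0 - φstar + T * ε) := by gcongr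
    _ = 2 * (φ w0 - φstar) / (γ * T) + 2 * ε / γ := by field_simp

/-- For a differentiable, `σ`-almost convex `φ` with finite infimum `φ*`,
`γ > σ`, proximal subproblems `F_t(w) = φ(w) + (γ/2)‖w − w_{t-1}‖²` with exact
minimizers `w_t*`, and random iterates achieving expected suboptimality `ε` on each
subproblem, `(1/T) Σ_{t=1}^T E‖w_{t-1} − w_t‖² ≤ 2(φ(w_0) − φ*)/(γT) + 2ε/γ`. -/
theorem minibatch_prox_average_step_bound
    {E : Type*} [NormedAddCommGroup E] [InnerProductSpace ℝ E] [CompleteSpace E]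
    {Ω : Type*} [MeasureSpace Ω] [IsProbabilityMeasure (volume : Measure Ω)]
    (φ : E → ℝ) (φ' : E → E) (σ γ ε φstar : ℝ) (T : ℕ)
    (hT : 0 < T) (hσ : 0 ≤ σ) (hγ : σ < γ)
    (hdiff : ∀ x, HasGradientAt φ (φ' x) x)
    (halmost : ∀ w w', φ w - φ w' - ⟪φ' w', w - w'⟫ ≥ -(σ / 2) * ‖w - w'‖ ^ 2)
    (hinf : IsGLB (Set.range φ) φstar)
    (w0 : E) (w : ℕ → Ω → E) (wstar : ℕ → Ω → E)
    (hw0 : w 0 = fun _ => w0)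
    (hmin : ∀ t ∈ Finset.Icc 1 T, ∀ ω, ∀ x,
        φ (wstar t ω) + γ / 2 * ‖wstar t ω - w (t - 1) ω‖ ^ 2
          ≤ φ x + γ / 2 * ‖x - w (t - 1) ω‖ ^ 2)
    (hint_phi : ∀ t ∈ Finset.Icc 0 T, Integrable (fun ω => φ (w t ω)))
    (hint_dist : ∀ t ∈ Finset.Icc 1 T,
        Integrable (fun ω => ‖w (t - 1) ω - w t ω‖ ^ 2))
    (hint_sub : ∀ t ∈ Finset.Icc 1 T,
        Integrable (fun ω => φ (w t ω) + γ / 2 * ‖w t ω - w (t - 1) ω‖ ^ 2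
          - (φ (wstar t ω) + γ / 2 * ‖wstar t ω - w (t - 1) ω‖ ^ 2)))
    (hsub : ∀ t ∈ Finset.Icc 1 T,
        ∫ ω, (φ (w t ω) + γ / 2 * ‖w t ω - w (t - 1) ω‖ ^ 2
          - (φ (wstar t ω) + γ / 2 * ‖wstar t ω - w (t - 1) ω‖ ^ 2)) ≤ ε) :
    (T : ℝ)⁻¹ * ∑ t ∈ Finset.Icc 1 T, ∫ ω, ‖w (t - 1) ω - w t ω‖ ^ 2
      ≤ 2 * (φ w0 - φstar) / (γ * T) + 2 * ε / γ :=
  minibatch_prox_average_step_bound_general φ σ γ ε φstar T hT hσ hγ hinf w0 w wstar hw0 hmin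
    hint_phi hint_sub hsub
end

section
/- Let φ be a differentiable σ-almost convex function on a real inner product space, let γ > σ, fix w_{t-1}, and let w_t be the exact (unique) minimizer of F_t(w) = φ(w) + (γ/2)‖w − w_{t-1}‖². Then ∇φ(w_t) = γ(w_{t-1} − w_t), and moreover φ(w_{t-1}) − φ(w_t) ≥ ((2γ − σ)/2)‖w_{t-1} − w_t‖². -/
open scoped RealInnerProductSpace
open InnerProductSpace

/-- If `φ` is differentiable and `σ`-almost convex, `γ > σ`, and `w_t`
is the exact minimizer of `F_t(w) = φ(w) + (γ/2)‖w − w_{t-1}‖²`, then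
`∇φ(w_t) = γ(w_{t-1} − w_t)` and `φ(w_{t-1}) − φ(w_t) ≥ ((2γ − σ)/2)‖w_{t-1} − w_t‖²`. -/
theorem prox_exact_minimizer_properties
    {E : Type*} [NormedAddCommGroup E] [InnerProductSpace ℝ E] [CompleteSpace E]
    (φ : E → ℝ) (φ' : E → E) (σ γ : ℝ)
    (hσ : 0 ≤ σ) (hγ : σ < γ)
    (hdiff : ∀ x, HasGradientAt φ (φ' x) x)
    (halmost : ∀ w w', φ w - φ w' - ⟪φ' w', w - w'⟫ ≥ -(σ / 2) * ‖w - w'‖ ^ 2)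
    (wprev wt : E)
    (hmin : ∀ x, φ wt + γ / 2 * ‖wt - wprev‖ ^ 2 ≤ φ x + γ / 2 * ‖x - wprev‖ ^ 2) :
    φ' wt = γ • (wprev - wt) ∧
      φ wprev - φ wt ≥ (2 * γ - σ) / 2 * ‖wprev - wt‖ ^ 2 := by
  have hF : HasFDerivAt (fun y => φ y + γ / 2 * ‖y - wprev‖ ^ 2)
      (toDual ℝ E (φ' wt) +
        (γ / 2) • (2 • (innerSL ℝ (wt - wprev)).comp (ContinuousLinearMap.id ℝ E))) wt := by
    have h1 : HasFDerivAt (fun y => ‖y - wprev‖ ^ 2)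
        (2 • (innerSL ℝ (wt - wprev)).comp (ContinuousLinearMap.id ℝ E)) wt := by
      simpa using ((hasFDerivAt_id wt).sub_const wprev).norm_sq
    exact (hdiff wt).hasFDerivAt.add (h1.const_mul (γ / 2))
  have hloc : IsLocalMin (fun y => φ y + γ / 2 * ‖y - wprev‖ ^ 2) wt :=
    Filter.Eventually.of_forall hmin
  have hz := hloc.hasFDerivAt_eq_zero hF
  have hzv : ∀ v : E, ⟪φ' wt + γ • (wt - wprev), v⟫ = 0 := by
    intro v
    have := congrArg (fun L => L v) hz
    simp only [ContinuousLinearMap.add_apply, ContinuousLinearMap.smul_apply,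
      ContinuousLinearMap.zero_apply, ContinuousLinearMap.coe_smul',
      ContinuousLinearMap.comp_apply, ContinuousLinearMap.id_apply, toDual_apply_apply,
      innerSL_apply_apply, smul_eq_mul, Pi.smul_apply, nsmul_eq_mul, Nat.cast_ofNat] at this
    rw [inner_add_left, real_inner_smul_left]
    linarith
  have hgrad : φ' wt = γ • (wprev - wt) := by
    have h0 : φ' wt + γ • (wt - wprev) = 0 :=
      inner_self_eq_zero.mp (hzv (φ' wt + γ • (wt - wprev)))
    have hneg : γ • (wt - wprev) = -(γ • (wprev - wt)) := by
      rw [← smul_neg, neg_sub]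
    rw [hneg, add_neg_eq_zero] at h0
    exact h0
  refine ⟨hgrad, ?_⟩
  have h := halmost wprev wt
  rw [hgrad, real_inner_smul_left, real_inner_self_eq_norm_sq] at h
  linarith
end

section
/- Fix samples ξ_1,…,ξ_b and a replacement sample ξ_i', where each ℓ(·, ξ) is differentiable, σ-almost convex and β-smooth on a real inner product space, and let r be γ-strongly convex with γ > σ. Let ŵ minimize F̂(w) = (1/b)Σ_{j=1}^b ℓ(w, ξ_j) + r(w), and let ŵ⁽ⁱ⁾ minimize the objective F̂⁽ⁱ⁾ obtained by replacing ξ_i with ξ_i'. Then (γ − σ)b · ‖ŵ⁽ⁱ⁾ − ŵ‖² ≤ (ℓ(ŵ⁽ⁱ⁾, ξ_i) − ℓ(ŵ, ξ_i)) + (ℓ(ŵ, ξ_i') − ℓ(ŵ⁽ⁱ⁾, ξ_i')). -/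
open scoped RealInnerProductSpace

/-!
Both empirical objectives are `(γ - σ)`-strongly convex, so each grows at least quadratically
away from its minimiser: `F̂ ŵ⁽ⁱ⁾ - F̂ ŵ ≥ (γ - σ)/2 ‖ŵ⁽ⁱ⁾ - ŵ‖²`, and symmetrically for `F̂⁽ⁱ⁾`.
Adding the two bounds, the objectives cancel except for the `1/b`-weighted losses at the one
sample in which they differ. The quadratic growth needs no first-order optimality condition: it
follows from the convexity lower bounds at points of the segment towards the minimiser.
-/

open Filter Topology

section empiricalObjective

variable {E Ξ : Type*}

noncomputable def empiricalObjective (ℓ : E → Ξ → ℝ) (r : E → ℝ) {b : ℕ} (ξs : Fin b → Ξ)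
    (w : E) : ℝ :=
  (b : ℝ)⁻¹ * ∑ j, ℓ w (ξs j) + r w

theorem empiricalObjective_update_sub (ℓ : E → Ξ → ℝ) (r : E → ℝ) {b : ℕ} (ξs : Fin b → Ξ)
    (i : Fin b) (ξ' : Ξ) (w : E) :
    empiricalObjective ℓ r (Function.update ξs i ξ') w - empiricalObjective ℓ r ξs w
      = (b : ℝ)⁻¹ * (ℓ w ξ' - ℓ w (ξs i)) := by
  simp only [empiricalObjective, Function.apply_update (fun _ ξ ↦ ℓ w ξ),
    Finset.sum_update_of_mem (Finset.mem_univ i)]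
  rw [← Finset.add_sum_erase _ _ (Finset.mem_univ i), Finset.sdiff_singleton_eq_erase]
  ring

end empiricalObjective

section StrongConvexity

variable {E : Type*} [NormedAddCommGroup E] [InnerProductSpace ℝ E]

/-- `G` is only required to supply the supporting quadratics, not to be the gradient of `F`;
a negative `μ` expresses almost convexity. -/
def IsStronglyConvexWith (F : E → ℝ) (G : E → E) (μ : ℝ) : Prop :=
  ∀ w w', μ / 2 * ‖w - w'‖ ^ 2 ≤ F w - F w' - ⟪G w', w - w'⟫

namespace IsStronglyConvexWith

variable {F F₁ F₂ : E → ℝ} {G G₁ G₂ : E → E} {μ μ₁ μ₂ : ℝ}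

theorem add (h₁ : IsStronglyConvexWith F₁ G₁ μ₁) (h₂ : IsStronglyConvexWith F₂ G₂ μ₂) :
    IsStronglyConvexWith (fun w ↦ F₁ w + F₂ w) (fun w ↦ G₁ w + G₂ w) (μ₁ + μ₂) := by
  intro w w'
  have := h₁ w w'
  have := h₂ w w'
  rw [inner_add_left]
  linarith

theorem const_mul {c : ℝ} (hc : 0 ≤ c) (h : IsStronglyConvexWith F G μ) :
    IsStronglyConvexWith (fun w ↦ c * F w) (fun w ↦ c • G w) (c * μ) := by
  intro w w'
  rw [real_inner_smul_left]
  nlinarith [mul_le_mul_of_nonneg_left (h w w') hc]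

theorem sum {ι : Type*} (s : Finset ι) {F : ι → E → ℝ} {G : ι → E → E} {μ : ι → ℝ}
    (h : ∀ j ∈ s, IsStronglyConvexWith (F j) (G j) (μ j)) :
    IsStronglyConvexWith (fun w ↦ ∑ j ∈ s, F j w) (fun w ↦ ∑ j ∈ s, G j w) (∑ j ∈ s, μ j) := by
  intro w w'
  rw [sum_inner, Finset.sum_div, Finset.sum_mul, ← Finset.sum_sub_distrib, ← Finset.sum_sub_distrib]
  exact Finset.sum_le_sum fun j hj ↦ h j hj w w'

/-- Along the segment `z = xs + t • (x - xs)` the two minorants at `z` evaluated at `x` and at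
`xs` combine, with weights `t` and `1 - t`, so that the `G z` terms cancel. -/
theorem one_sub_mul_le_sub_of_forall_le (h : IsStronglyConvexWith F G μ) {x xs : E}
    (hmin : ∀ y, F xs ≤ F y) {t : ℝ} (ht₀ : 0 < t) (ht₁ : t < 1) :
    (1 - t) * (μ / 2 * ‖x - xs‖ ^ 2) ≤ F x - F xs := by
  set z := xs + t • (x - xs)
  have hx : x - z = (1 - t) • (x - xs) := by module
  have hxs : xs - z = (-t) • (x - xs) := by module
  have h₁ := h x z
  have h₂ := h xs z
  rw [hx, norm_smul, real_inner_smul_right, Real.norm_eq_abs, mul_pow, sq_abs] at h₁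
  rw [hxs, norm_smul, real_inner_smul_right, Real.norm_eq_abs, mul_pow, sq_abs] at h₂
  refine le_of_mul_le_mul_left ?_ ht₀
  nlinarith [mul_le_mul_of_nonneg_left h₁ ht₀.le,
    mul_le_mul_of_nonneg_left h₂ (sub_nonneg.2 ht₁.le), hmin z]

theorem quadratic_growth (h : IsStronglyConvexWith F G μ) {xs : E} (hmin : ∀ y, F xs ≤ F y)
    (x : E) : μ / 2 * ‖x - xs‖ ^ 2 ≤ F x - F xs := by
  have hlim : Tendsto (fun t : ℝ ↦ (1 - t) * (μ / 2 * ‖x - xs‖ ^ 2)) (𝓝[>] 0)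
      (𝓝 (μ / 2 * ‖x - xs‖ ^ 2)) :=
    (Continuous.tendsto' (by fun_prop) 0 _ (by simp)).mono_left nhdsWithin_le_nhds
  refine le_of_tendsto hlim ?_
  filter_upwards [Ioo_mem_nhdsGT (zero_lt_one' ℝ)] with t ht
  exact h.one_sub_mul_le_sub_of_forall_le hmin ht.1 ht.2

end IsStronglyConvexWith

section empiricalObjective

variable {Ξ : Type*} {ℓ : E → Ξ → ℝ} {ℓ' : E → Ξ → E} {r : E → ℝ} {r' : E → E} {σ γ : ℝ}
  {b : ℕ}

theorem isStronglyConvexWith_empiricalObjective (hb : b ≠ 0)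
    (hℓ : ∀ ξ, IsStronglyConvexWith (ℓ · ξ) (ℓ' · ξ) (-σ))
    (hr : IsStronglyConvexWith r r' γ) (ξs : Fin b → Ξ) :
    IsStronglyConvexWith (empiricalObjective ℓ r ξs)
      (fun w ↦ (b : ℝ)⁻¹ • ∑ j, ℓ' w (ξs j) + r' w) (γ - σ) := by
  have hmean := (IsStronglyConvexWith.sum Finset.univ fun j _ ↦ hℓ (ξs j)).const_mul
    (inv_nonneg.2 (Nat.cast_nonneg b))
  have hmean_modulus : (b : ℝ)⁻¹ * ∑ _j : Fin b, -σ = -σ := by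
    simp [hb]
  rw [hmean_modulus] at hmean
  rw [sub_eq_neg_add]
  exact hmean.add hr

end empiricalObjective

end StrongConvexity

theorem replace_one_sample_stability_general
    {E : Type*} [NormedAddCommGroup E] [InnerProductSpace ℝ E]
    {Ξ : Type*}
    (ℓ : E → Ξ → ℝ) (ℓ' : E → Ξ → E) (r : E → ℝ) (r' : E → E)
    (σ γ : ℝ) (b : ℕ) (hb0 : 0 < b)
    (hℓalmost : ∀ ξ w w', ℓ w ξ - ℓ w' ξ - ⟪ℓ' w' ξ, w - w'⟫ ≥ -(σ / 2) * ‖w - w'‖ ^ 2)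
    (hrstrong : ∀ w w', r w - r w' - ⟪r' w', w - w'⟫ ≥ γ / 2 * ‖w - w'‖ ^ 2)
    (ξs : Fin b → Ξ) (i : Fin b) (ξ' : Ξ)
    (wHat wHatI : E)
    (hwHat : ∀ x, (b : ℝ)⁻¹ * ∑ j, ℓ wHat (ξs j) + r wHat
          ≤ (b : ℝ)⁻¹ * ∑ j, ℓ x (ξs j) + r x)
    (hwHatI : ∀ x,
        (b : ℝ)⁻¹ * ∑ j, ℓ wHatI (Function.update ξs i ξ' j) + r wHatI
          ≤ (b : ℝ)⁻¹ * ∑ j, ℓ x (Function.update ξs i ξ' j) + r x) :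
    (γ - σ) * b * ‖wHatI - wHat‖ ^ 2
      ≤ (ℓ wHatI (ξs i) - ℓ wHat (ξs i)) + (ℓ wHat ξ' - ℓ wHatI ξ') := by
  have hℓ : ∀ ξ, IsStronglyConvexWith (ℓ · ξ) (ℓ' · ξ) (-σ) := fun ξ w w' ↦ by
    rw [neg_div]
    exact hℓalmost ξ w w'
  have hF := isStronglyConvexWith_empiricalObjective hb0.ne' hℓ hrstrong
  have hgrowth := (hF ξs).quadratic_growth hwHat wHatI
  have hgrowthI := (hF (Function.update ξs i ξ')).quadratic_growth hwHatI wHat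
  rw [norm_sub_rev] at hgrowthI
  have hshift := empiricalObjective_update_sub ℓ r ξs i ξ'
  have hshift₁ := hshift wHat
  have hshift₂ := hshift wHatI
  calc (γ - σ) * b * ‖wHatI - wHat‖ ^ 2
      = b * ((γ - σ) / 2 * ‖wHatI - wHat‖ ^ 2 + (γ - σ) / 2 * ‖wHatI - wHat‖ ^ 2) := by ring
    _ ≤ b * ((b : ℝ)⁻¹ * ((ℓ wHatI (ξs i) - ℓ wHat (ξs i)) + (ℓ wHat ξ' - ℓ wHatI ξ'))) := by
      gcongr
      linarith
    _ = (ℓ wHatI (ξs i) - ℓ wHat (ξs i)) + (ℓ wHat ξ' - ℓ wHatI ξ') := by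
      field_simp

/-- Replace-one-sample stability inequality: with `ℓ(·,ξ)` differentiable,
`σ`-almost convex and `β`-smooth, `r` `γ`-strongly convex with `γ > σ`, `ŵ` the minimizer
of `F̂` on samples `ξ_1,…,ξ_b` and `ŵ⁽ⁱ⁾` the minimizer after replacing `ξ_i` by `ξ_i'`,
`(γ − σ)b‖ŵ⁽ⁱ⁾ − ŵ‖² ≤ (ℓ(ŵ⁽ⁱ⁾,ξ_i) − ℓ(ŵ,ξ_i)) + (ℓ(ŵ,ξ_i') − ℓ(ŵ⁽ⁱ⁾,ξ_i'))`. -/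
theorem replace_one_sample_stability
    {E : Type*} [NormedAddCommGroup E] [InnerProductSpace ℝ E] [CompleteSpace E]
    {Ξ : Type*}
    (ℓ : E → Ξ → ℝ) (ℓ' : E → Ξ → E) (r : E → ℝ) (r' : E → E)
    (β σ γ : ℝ) (b : ℕ) (hb0 : 0 < b)
    (hσ : 0 ≤ σ) (hγ : σ < γ)
    (hℓdiff : ∀ w ξ, HasGradientAt (fun x => ℓ x ξ) (ℓ' w ξ) w)
    (hℓsmooth : ∀ ξ w w', ‖ℓ' w ξ - ℓ' w' ξ‖ ≤ β * ‖w - w'‖)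
    (hℓalmost : ∀ ξ w w', ℓ w ξ - ℓ w' ξ - ⟪ℓ' w' ξ, w - w'⟫ ≥ -(σ / 2) * ‖w - w'‖ ^ 2)
    (hrdiff : ∀ w, HasGradientAt r (r' w) w)
    (hrstrong : ∀ w w', r w - r w' - ⟪r' w', w - w'⟫ ≥ γ / 2 * ‖w - w'‖ ^ 2)
    (ξs : Fin b → Ξ) (i : Fin b) (ξ' : Ξ)
    (wHat wHatI : E)
    (hwHat : ∀ x, (b : ℝ)⁻¹ * ∑ j, ℓ wHat (ξs j) + r wHat
          ≤ (b : ℝ)⁻¹ * ∑ j, ℓ x (ξs j) + r x)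
    (hwHatI : ∀ x,
        (b : ℝ)⁻¹ * ∑ j, ℓ wHatI (Function.update ξs i ξ' j) + r wHatI
          ≤ (b : ℝ)⁻¹ * ∑ j, ℓ x (Function.update ξs i ξ' j) + r x) :
    (γ - σ) * b * ‖wHatI - wHat‖ ^ 2
      ≤ (ℓ wHatI (ξs i) - ℓ wHat (ξs i)) + (ℓ wHat ξ' - ℓ wHatI ξ') :=
  replace_one_sample_stability_general ℓ ℓ' r r' σ γ b hb0 hℓalmost hrstrong ξs i ξ' wHat wHatI
    hwHat hwHatI
end

section
/- Let (u_S)_{S≥0} be a non-negative real sequence, (A_S)_{S≥0} a nondecreasing sequence with A_0 ≥ u_0², and λ_s ≥ 0 for all s, such that for all S ≥ 1: u_S² ≤ A_S + Σ_{s=1}^S λ_s u_s. Then for all S ≥ 1, u_S ≤ (1/2)Σ_{s=1}^S λ_s + ( A_S + ((1/2)Σ_{s=1}^S λ_s)² )^{1/2} ≤ sqrt(A_S) + Σ_{s=1}^S λ_s. -/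
/-! Let `m ≤ S` be an index where `u` is largest on `{0, …, S}` and `Λ = Σ_{s=1}^S λ_s`.
Bounding every `u_s` in the recursion at `m` by `u_m`, and `A_m` by `A_S`, gives the quadratic
inequality `u_m² ≤ A_S + Λ u_m`, whose larger root is `Λ/2 + √(A_S + (Λ/2)²)`; the second bound
is `√(a + c²) ≤ √a + c`. -/

open Finset

lemma le_add_sqrt_of_sq_le_add_two_mul {x a c : ℝ} (h : x ^ 2 ≤ a + 2 * c * x) :
    x ≤ c + √(a + c ^ 2) := by
  have hsq : (x - c) ^ 2 ≤ a + c ^ 2 := by linarith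
  linarith [Real.le_sqrt_of_sq_le hsq]

lemma sqrt_add_sq_le {a c : ℝ} (ha : 0 ≤ a) (hc : 0 ≤ c) : √(a + c ^ 2) ≤ √a + c := by
  rw [Real.sqrt_le_iff]
  refine ⟨by positivity, ?_⟩
  nlinarith [Real.sq_sqrt ha, Real.sqrt_nonneg a]

section Recursion

variable {u A lam : ℕ → ℝ}

lemma sq_le_add_sum_mul_of_forall_le (hu : ∀ s, 0 ≤ u s) (hlam : ∀ s, 0 ≤ lam s) (hA : Monotone A)
    (hrec : ∀ S, u S ^ 2 ≤ A S + ∑ s ∈ Icc 1 S, lam s * u s) {m S : ℕ} (hmS : m ≤ S)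
    (hmax : ∀ s ≤ S, u s ≤ u m) :
    u m ^ 2 ≤ A S + (∑ s ∈ Icc 1 S, lam s) * u m :=
  calc u m ^ 2 ≤ A m + ∑ s ∈ Icc 1 m, lam s * u s := hrec m
    _ ≤ A S + ∑ s ∈ Icc 1 S, lam s * u s :=
      add_le_add (hA hmS) <| sum_le_sum_of_subset_of_nonneg (Icc_subset_Icc_right hmS)
        fun s _ _ ↦ mul_nonneg (hlam s) (hu s)
    _ ≤ A S + ∑ s ∈ Icc 1 S, lam s * u m := by
      gcongr with s hs
      · exact hlam s
      · exact hmax s (mem_Icc.mp hs).2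
    _ = A S + (∑ s ∈ Icc 1 S, lam s) * u m := by rw [sum_mul]

end Recursion

/-- Schmidt–Roux–Bach recursion lemma: if a non-negative sequence
`(u_S)` satisfies `u_S² ≤ A_S + Σ_{s=1}^S λ_s u_s` for all `S ≥ 1`, where `(A_S)` is
nondecreasing with `A_0 ≥ u_0²` and `λ_s ≥ 0`, then for all `S ≥ 1`,
`u_S ≤ (1/2)Σ_{s=1}^S λ_s + (A_S + ((1/2)Σ_{s=1}^S λ_s)²)^{1/2}
≤ sqrt(A_S) + Σ_{s=1}^S λ_s`. -/
theorem recursion_resolution_lemma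
    (u A lam : ℕ → ℝ)
    (hu : ∀ s, 0 ≤ u s)
    (hlam : ∀ s, 0 ≤ lam s)
    (hA : Monotone A)
    (hA0 : u 0 ^ 2 ≤ A 0)
    (hrec : ∀ S, 1 ≤ S → u S ^ 2 ≤ A S + ∑ s ∈ Finset.Icc 1 S, lam s * u s) :
    ∀ S, 1 ≤ S →
      u S ≤ (1 / 2) * ∑ s ∈ Finset.Icc 1 S, lam s
          + Real.sqrt (A S + ((1 / 2) * ∑ s ∈ Finset.Icc 1 S, lam s) ^ 2) ∧
      (1 / 2) * ∑ s ∈ Finset.Icc 1 S, lam s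
          + Real.sqrt (A S + ((1 / 2) * ∑ s ∈ Finset.Icc 1 S, lam s) ^ 2)
        ≤ Real.sqrt (A S) + ∑ s ∈ Finset.Icc 1 S, lam s := by
  intro S _
  set Λ := ∑ s ∈ Icc 1 S, lam s
  have hrec' : ∀ S, u S ^ 2 ≤ A S + ∑ s ∈ Icc 1 S, lam s * u s := fun S ↦
    S.eq_zero_or_pos.elim (fun h ↦ by subst h; simpa using hA0) (hrec S)
  obtain ⟨m, hm, hmax⟩ := exists_max_image (range (S + 1)) u ⟨0, by simp⟩
  have hmax' : ∀ s ≤ S, u s ≤ u m := fun s hs ↦ hmax s (mem_range_succ_iff.mpr hs)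
  have hquad : u m ^ 2 ≤ A S + 2 * ((1 / 2) * Λ) * u m := by
    convert sq_le_add_sum_mul_of_forall_le hu hlam hA hrec' (mem_range_succ_iff.mp hm) hmax' using 3
    ring
  have hAS : 0 ≤ A S := (sq_nonneg _).trans (hA0.trans (hA S.zero_le))
  have hΛ : 0 ≤ Λ := sum_nonneg fun s _ ↦ hlam s
  refine ⟨(hmax' S le_rfl).trans (le_add_sqrt_of_sq_le_add_two_mul hquad), ?_⟩
  linarith [sqrt_add_sq_le hAS (by positivity : 0 ≤ (1 / 2) * Λ)]
end
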